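/- arXiv:2010.03363 — 6 statements merged into one kernel-verified Lean document; each statement's English description precedes it below -/
import Mathlib

section
/- For real numbers x_1,...,x_m and any integer n with 1 ≤ n ≤ m-1, the alternating sum P_n(x_1,...,x_m) = Σ_{∅≠S⊆{1,...,m}} (-1)^{|S|+1} (Σ_{j∈S} x_j)^n equals 0. -/
open Finset

noncomputable def P (m n : ℕ) (x : Fin m → ℝ) : ℝ :=
  ∑ S ∈ (Finset.univ : Finset (Fin m)).powerset.filter Finset.Nonempty,
    (-1 : ℝ) ^ (S.card + 1) * (∑ j ∈ S, x j) ^ n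

lemma aux_pow_sum {α : Type*} [DecidableEq α] (s : Finset α) (hs : s.Nonempty) :
    ∑ U ∈ s.powerset, (-1 : ℝ) ^ U.card = 0 := by
  have h := Finset.sum_powerset_neg_one_pow_card_of_nonempty hs
  have : ((∑ U ∈ s.powerset, (-1 : ℤ) ^ U.card : ℤ) : ℝ) =
      ∑ U ∈ s.powerset, (-1 : ℝ) ^ U.card := by push_cast; rfl
  rw [← this, h]; simp

lemma aux_filter_sum {m : ℕ} (T : Finset (Fin m)) (hT : T ≠ univ) :
    ∑ S ∈ (univ : Finset (Fin m)).powerset.filter (fun S => T ⊆ S),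
      (-1 : ℝ) ^ S.card = 0 := by
  have key : ∑ S ∈ (univ : Finset (Fin m)).powerset.filter (fun S => T ⊆ S),
      (-1 : ℝ) ^ S.card = ∑ U ∈ Tᶜ.powerset, (-1 : ℝ) ^ (T.card + U.card) := by
    refine Finset.sum_bij' (fun S _ => S \ T) (fun U _ => U ∪ T) ?_ ?_ ?_ ?_ ?_
    · intro S hS
      simp only [mem_filter, mem_powerset] at hS
      simp only [mem_powerset, compl_eq_univ_sdiff]
      exact sdiff_subset_sdiff hS.1 le_rfl
    · intro U hU
      simp only [mem_powerset, compl_eq_univ_sdiff] at hU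
      simp only [mem_filter, mem_powerset]
      exact ⟨subset_univ _, subset_union_right⟩
    · intro S hS
      simp only [mem_filter, mem_powerset] at hS
      exact sdiff_union_of_subset hS.2
    · intro U hU
      simp only [mem_powerset, compl_eq_univ_sdiff] at hU
      have hd : Disjoint U T := Finset.disjoint_left.2 fun a ha => (mem_sdiff.1 (hU ha)).2
      show (U ∪ T) \ T = U
      rw [union_sdiff_right, Finset.sdiff_eq_self_iff_disjoint.2 hd]
    · intro S hS
      simp only [mem_filter, mem_powerset] at hS
      congr 1
      have := card_le_card hS.2
      rw [card_sdiff_of_subset hS.2]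
      omega
  rw [key]
  have hc : Tᶜ.Nonempty := by
    rw [← card_pos, card_compl]
    have : T.card < Fintype.card (Fin m) := (card_lt_iff_ne_univ T).2 hT
    omega
  simp only [pow_add, ← mul_sum]
  rw [aux_pow_sum _ hc, mul_zero]

theorem stmt_0 (m n : ℕ) (hn : 1 ≤ n) (hnm : n ≤ m - 1) (x : Fin m → ℝ) :
    P m n x = 0 := by
  have hQ : ∑ S ∈ (univ : Finset (Fin m)).powerset,
      (-1 : ℝ) ^ S.card * (∑ j ∈ S, x j) ^ n = 0 := by
    have expand : ∀ S ∈ (univ : Finset (Fin m)).powerset,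
        (-1 : ℝ) ^ S.card * (∑ j ∈ S, x j) ^ n =
        ∑ p ∈ (univ : Finset (Fin n → Fin m)),
          (if ∀ i, p i ∈ S then (-1 : ℝ) ^ S.card * ∏ i, x (p i) else 0) := by
      intro S _
      rw [Finset.sum_pow', Finset.mul_sum]
      rw [← Finset.sum_filter]
      refine Finset.sum_nbij' id id ?_ ?_ ?_ ?_ ?_ <;>
        simp [Fintype.mem_piFinset]
    rw [Finset.sum_congr rfl expand, Finset.sum_comm]
    refine Finset.sum_eq_zero fun p _ => ?_
    rw [← Finset.sum_filter]
    have himg : ∀ S : Finset (Fin m), (∀ i, p i ∈ S) ↔ image p univ ⊆ S := by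
      intro S; simp [image_subset_iff]
    have : ((univ : Finset (Fin m)).powerset.filter fun S => ∀ i, p i ∈ S) =
        (univ : Finset (Fin m)).powerset.filter fun S => image p univ ⊆ S := by
      apply filter_congr; intro S _; simpa using himg S
    rw [this]
    have hne : image p univ ≠ univ := by
      intro h
      have h1 : (image p univ).card ≤ (univ : Finset (Fin n)).card := card_image_le
      rw [h] at h1
      simp only [card_univ, Fintype.card_fin] at h1
      omega
    calc ∑ S ∈ (univ : Finset (Fin m)).powerset.filter fun S => image p univ ⊆ S,
          (-1 : ℝ) ^ S.card * ∏ i, x (p i)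
        = (∑ S ∈ (univ : Finset (Fin m)).powerset.filter fun S => image p univ ⊆ S,
          (-1 : ℝ) ^ S.card) * ∏ i, x (p i) := by rw [Finset.sum_mul]
      _ = 0 := by rw [aux_filter_sum _ hne, zero_mul]
  have hP : P m n x = -∑ S ∈ (univ : Finset (Fin m)).powerset,
      (-1 : ℝ) ^ S.card * (∑ j ∈ S, x j) ^ n := by
    rw [P, Finset.sum_filter, ← Finset.sum_neg_distrib]
    refine Finset.sum_congr rfl fun S _ => ?_
    by_cases h : S.Nonempty
    · simp [h, pow_succ]
    · rw [not_nonempty_iff_eq_empty] at h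
      subst h
      simp [zero_pow (by omega : n ≠ 0)]
  rw [hP, hQ, neg_zero]
end

section
/- For even m = 2q, odd n = 2l+1, and real variables x_1,...,x_{2q} with Σ x_j = 0, one has P_{2l+1}(x_1,...,x_{2q}) = (−1)^{q−1} Σ_{S⊆{1,...,2q}, |S|=q} (Σ_{j∈S} x_j)^{2l+1}; and this sum is 0 since subsets of size q pair with their complements. -/
theorem stmt_5 (q l : ℕ) (x : Fin (2 * q) → ℝ) (hx : ∑ j, x j = 0) :
    P (2 * q) (2 * l + 1) x =
      (-1 : ℝ) ^ (q - 1) *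
        ∑ S ∈ (Finset.univ : Finset (Fin (2 * q))).powerset.filter (fun S => S.card = q),
          (∑ j ∈ S, x j) ^ (2 * l + 1) ∧
    (∑ S ∈ (Finset.univ : Finset (Fin (2 * q))).powerset.filter (fun S => S.card = q),
        (∑ j ∈ S, x j) ^ (2 * l + 1)) = 0 := by
  classical
  have hodd : Odd (2 * l + 1) := ⟨l, rfl⟩
  have hcompl : ∀ S : Finset (Fin (2 * q)), (∑ j ∈ Sᶜ, x j) = -(∑ j ∈ S, x j) := by
    intro S
    have := Finset.sum_add_sum_compl S x
    rw [hx] at this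
    linarith
  have hselfc : ∀ S : Finset (Fin (2 * q)), Sᶜ = S → S = ∅ := by
    intro S h
    have hd : Disjoint S Sᶜ := disjoint_compl_right
    rw [h] at hd
    simpa using disjoint_self.mp hd
  -- second part
  have h2 : (∑ S ∈ (Finset.univ : Finset (Fin (2 * q))).powerset.filter (fun S => S.card = q),
      (∑ j ∈ S, x j) ^ (2 * l + 1)) = 0 := by
    refine Finset.sum_involution (fun S _ => Sᶜ) (fun S hS => ?_) (fun S hS hne h => ?_)
      (fun S hS => ?_) (fun S hS => compl_compl S)
    · rw [hcompl S, hodd.neg_pow]; ring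
    · exact hne (by rw [hselfc S h]; simp)
    · simp only [Finset.mem_filter, Finset.mem_powerset] at hS ⊢
      refine ⟨Finset.subset_univ _, ?_⟩
      rw [Finset.card_compl, hS.2, Fintype.card_fin]
      omega
  refine ⟨?_, h2⟩
  rw [h2, mul_zero]
  -- P = 0
  unfold P
  set s := (Finset.univ : Finset (Fin (2 * q))).powerset.filter Finset.Nonempty with hs
  by_cases hq : q = 0
  · subst hq
    refine Finset.sum_eq_zero fun S hS => ?_
    rw [hs, Finset.mem_filter] at hS
    obtain ⟨a, ha⟩ := hS.2
    exact absurd a.isLt (by omega)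
  · have hne : Nonempty (Fin (2 * q)) := ⟨⟨0, by omega⟩⟩
    have huniv : (Finset.univ : Finset (Fin (2 * q))) ∈ s := by
      rw [hs, Finset.mem_filter]
      exact ⟨Finset.mem_powerset_self _, Finset.univ_nonempty⟩
    rw [← Finset.sum_erase s (a := (Finset.univ : Finset (Fin (2 * q))))
      (f := fun S => (-1 : ℝ) ^ (S.card + 1) * (∑ j ∈ S, x j) ^ (2 * l + 1))
      (by simp only [hx]; simp)]
    refine Finset.sum_involution (fun S _ => Sᶜ) (fun S hS => ?_) (fun S hS hfne h => ?_)
      (fun S hS => ?_) (fun S hS => compl_compl S)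
    · have hcard : S.card ≤ 2 * q := by
        simpa using Finset.card_le_card (Finset.subset_univ S)
      have hc : Sᶜ.card = 2 * q - S.card := by
        rw [Finset.card_compl, Fintype.card_fin]
      have hsign : (-1 : ℝ) ^ (Sᶜ.card + 1) = (-1 : ℝ) ^ (S.card + 1) := by
        rw [hc]
        rcases Nat.even_or_odd (S.card + 1) with he | ho
        · have he' : Even (2 * q - S.card + 1) := by
            have := Nat.even_iff.mp he
            exact Nat.even_iff.mpr (by omega)
          rw [he.neg_one_pow, he'.neg_one_pow]
        · have ho' : Odd (2 * q - S.card + 1) := by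
            have := Nat.odd_iff.mp ho
            exact Nat.odd_iff.mpr (by omega)
          rw [ho.neg_one_pow, ho'.neg_one_pow]
      rw [hsign, hcompl S, hodd.neg_pow]
      ring
    · exfalso
      have hSe := hselfc S h
      rw [Finset.mem_erase, hs, Finset.mem_filter] at hS
      exact Finset.not_nonempty_empty (hSe ▸ hS.2.2)
    · rw [Finset.mem_erase] at hS
      show Sᶜ ∈ s.erase Finset.univ
      rw [Finset.mem_erase]
      constructor
      · intro h
        have hSe : S = ∅ := by simpa using congrArg compl h
        rw [hs, Finset.mem_filter] at hS
        exact Finset.not_nonempty_empty (hSe ▸ hS.2.2)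
      · rw [hs, Finset.mem_filter, Finset.mem_powerset]
        refine ⟨Finset.subset_univ _, ?_⟩
        rw [← Finset.card_pos, Finset.card_compl, Fintype.card_fin]
        have : S.card < 2 * q := by
          have := Finset.card_lt_card (Finset.ssubset_univ_iff.mpr hS.1)
          simpa using this
        omega
end

section
/- The recursion P_n(x_1,...,x_m) = − Σ_{k=1}^{n−1} C(n,k) x_m^{n−k} P_k(x_1,...,x_{m−1}) holds for all real x_1,...,x_m and all n ≥ 1, m ≥ 2, where C(n,k) is the binomial coefficient. -/
open Finset

/-- Sum over the full powerset (including the empty set). -/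
noncomputable def Q (m n : ℕ) (x : Fin m → ℝ) : ℝ :=
  ∑ S ∈ (Finset.univ : Finset (Fin m)).powerset,
    (-1 : ℝ) ^ (S.card + 1) * (∑ j ∈ S, x j) ^ n

lemma P_eq_Q (m n : ℕ) (hn : 1 ≤ n) (x : Fin m → ℝ) : P m n x = Q m n x := by
  classical
  unfold P Q
  have htot := Finset.sum_filter_add_sum_filter_not ((Finset.univ : Finset (Fin m)).powerset)
    Finset.Nonempty (fun S => (-1 : ℝ) ^ (S.card + 1) * (∑ j ∈ S, x j) ^ n)
  rw [← htot, left_eq_add]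
  refine Finset.sum_eq_zero ?_
  intro S hS
  simp only [mem_filter, Finset.not_nonempty_iff_eq_empty] at hS
  rw [hS.2]
  simp [zero_pow (by omega : n ≠ 0)]

lemma sum_powerset_map {α β : Type*} [DecidableEq α] [DecidableEq β]
    (e : α ↪ β) (s : Finset α) (f : Finset β → ℝ) :
    ∑ S ∈ (s.map e).powerset, f S = ∑ T ∈ s.powerset, f (T.map e) := by
  refine (Finset.sum_bij (fun T _ => T.map e) ?_ ?_ ?_ ?_).symm
  · intro T hT
    rw [mem_powerset] at hT ⊢
    exact Finset.map_subset_map.2 hT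
  · intro T₁ _ T₂ _ h
    exact Finset.map_injective e h
  · intro S hS
    rw [mem_powerset, Finset.subset_map_iff] at hS
    obtain ⟨u, hu, rfl⟩ := hS
    exact ⟨u, mem_powerset.2 hu, rfl⟩
  · intro T _; rfl

/-- Key binomial-collapse lemma. -/
lemma key (m n : ℕ) (hm : 1 ≤ m) (hn : 1 ≤ n) (y : ℝ) (x : Fin m → ℝ) :
    ∑ T ∈ (Finset.univ : Finset (Fin m)).powerset,
      (-1 : ℝ) ^ T.card * (∑ j ∈ T, x j + y) ^ n
    = - ∑ k ∈ Finset.Icc 1 n, (n.choose k : ℝ) * y ^ (n - k) * Q m k x := by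
  classical
  have expand : ∀ T : Finset (Fin m),
      (∑ j ∈ T, x j + y) ^ n
        = ∑ k ∈ Finset.range (n + 1),
            (∑ j ∈ T, x j) ^ k * y ^ (n - k) * (n.choose k : ℝ) :=
    fun T => add_pow _ _ _
  calc
    ∑ T ∈ (Finset.univ : Finset (Fin m)).powerset,
        (-1 : ℝ) ^ T.card * (∑ j ∈ T, x j + y) ^ n
      = ∑ k ∈ Finset.range (n + 1), ∑ T ∈ (Finset.univ : Finset (Fin m)).powerset,
          (-1 : ℝ) ^ T.card * ((∑ j ∈ T, x j) ^ k * y ^ (n - k) * (n.choose k : ℝ)) := by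
        rw [Finset.sum_comm]
        exact Finset.sum_congr rfl fun T _ => by rw [expand T, Finset.mul_sum]
    _ = ∑ k ∈ Finset.range (n + 1),
          (n.choose k : ℝ) * y ^ (n - k) *
            (∑ T ∈ (Finset.univ : Finset (Fin m)).powerset,
              (-1 : ℝ) ^ T.card * (∑ j ∈ T, x j) ^ k) := by
        refine Finset.sum_congr rfl fun k _ => ?_
        rw [Finset.mul_sum]
        exact Finset.sum_congr rfl fun T _ => by ring
    _ = ∑ k ∈ Finset.Icc 1 n,
          (n.choose k : ℝ) * y ^ (n - k) *
            (∑ T ∈ (Finset.univ : Finset (Fin m)).powerset,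
              (-1 : ℝ) ^ T.card * (∑ j ∈ T, x j) ^ k) := by
        rw [show Finset.range (n + 1) = insert 0 (Finset.Icc 1 n) by
          ext k; simp [Finset.mem_range, Finset.mem_Icc]; omega]
        rw [Finset.sum_insert (by simp)]
        have h0 : ∑ T ∈ (Finset.univ : Finset (Fin m)).powerset,
            (-1 : ℝ) ^ T.card * (∑ j ∈ T, x j) ^ 0 = 0 := by
          simp only [pow_zero, mul_one]
          have hne : (Finset.univ : Finset (Fin m)).Nonempty := ⟨⟨0, hm⟩, Finset.mem_univ _⟩
          exact_mod_cast Finset.sum_powerset_neg_one_pow_card_of_nonempty hne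
        rw [h0, mul_zero, zero_add]
    _ = - ∑ k ∈ Finset.Icc 1 n, (n.choose k : ℝ) * y ^ (n - k) * Q m k x := by
        rw [← Finset.sum_neg_distrib]
        refine Finset.sum_congr rfl fun k hk => ?_
        have : ∑ T ∈ (Finset.univ : Finset (Fin m)).powerset,
            (-1 : ℝ) ^ T.card * (∑ j ∈ T, x j) ^ k = - Q m k x := by
          unfold Q
          rw [← Finset.sum_neg_distrib]
          exact Finset.sum_congr rfl fun T _ => by rw [pow_succ]; ring
        rw [this]; ring

theorem stmt_6 (m n : ℕ) (hm : 1 ≤ m) (hn : 1 ≤ n) (x : Fin (m + 1) → ℝ) :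
    P (m + 1) n x =
      -∑ k ∈ Finset.Icc 1 (n - 1),
        (n.choose k : ℝ) * (x (Fin.last m)) ^ (n - k) * P m k (x ∘ Fin.castSucc) := by
  classical
  set y := x (Fin.last m)
  have hQ : Q (m + 1) n x
      = Q m n (x ∘ Fin.castSucc)
        + ∑ T ∈ (Finset.univ : Finset (Fin m)).powerset,
            (-1 : ℝ) ^ T.card * (∑ j ∈ T, (x ∘ Fin.castSucc) j + y) ^ n := by
    unfold Q
    rw [Fin.univ_castSuccEmb, Finset.cons_eq_insert,
      Finset.sum_powerset_insert (by simp)]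
    congr 1
    · rw [sum_powerset_map]
      refine Finset.sum_congr rfl fun T _ => ?_
      rw [Finset.card_map, Finset.sum_map]
      rfl
    · rw [sum_powerset_map]
      refine Finset.sum_congr rfl fun T _ => ?_
      have hlast : Fin.last m ∉ T.map Fin.castSuccEmb := by
        simp [Fin.castSuccEmb]
        intro j _; exact (Fin.castSucc_lt_last j).ne
      rw [Finset.card_insert_of_notMem hlast, Finset.sum_insert hlast,
        Finset.card_map, Finset.sum_map]
      have : (-1 : ℝ) ^ (T.card + 1 + 1) = (-1 : ℝ) ^ T.card := by
        rw [pow_succ, pow_succ]; ring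
      rw [this]
      congr 1
      rw [add_comm y]
      rfl
  rw [P_eq_Q (m + 1) n hn x, hQ, key m n hm hn y (x ∘ Fin.castSucc)]
  have hsplit : ∑ k ∈ Finset.Icc 1 n, (n.choose k : ℝ) * y ^ (n - k) * Q m k (x ∘ Fin.castSucc)
      = (∑ k ∈ Finset.Icc 1 (n-1), (n.choose k : ℝ) * y ^ (n - k) * Q m k (x ∘ Fin.castSucc))
        + Q m n (x ∘ Fin.castSucc) := by
    obtain ⟨n', rfl⟩ : ∃ n', n = n' + 1 := ⟨n - 1, by omega⟩
    rw [show n' + 1 - 1 = n' from rfl, Finset.sum_Icc_succ_top (by omega : 1 ≤ n' + 1)]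
    simp
  rw [hsplit]
  have hPQ : ∀ k ∈ Finset.Icc 1 (n-1),
      (n.choose k : ℝ) * y ^ (n - k) * P m k (x ∘ Fin.castSucc)
      = (n.choose k : ℝ) * y ^ (n - k) * Q m k (x ∘ Fin.castSucc) := fun k hk => by
    rw [P_eq_Q m k (Finset.mem_Icc.1 hk).1 _]
  rw [Finset.sum_congr rfl hPQ]
  ring
end

section
/- If all x_1,...,x_m are positive and n ≥ m, then (−1)^{m+1} P_n(x_1,...,x_m) > 0; that is, P_n > 0 when m is odd and P_n < 0 when m is even. -/
open Finset

lemma real_sum_powerset {α : Type*} [DecidableEq α] (s : Finset α) :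
    (∑ T ∈ s.powerset, (-1 : ℝ) ^ T.card) = if s = ∅ then 1 else 0 := by
  have h := Finset.sum_powerset_neg_one_pow_card (x := s)
  have h2 : ((∑ T ∈ s.powerset, (-1 : ℤ) ^ T.card : ℤ) : ℝ)
      = ∑ T ∈ s.powerset, (-1 : ℝ) ^ T.card := by push_cast; rfl
  rw [← h2, h]
  split <;> simp

lemma mySurjSum (m : ℕ) (R : Finset (Fin m)) :
    (∑ S ∈ Finset.univ.powerset.filter (fun S => R ⊆ S), (-1 : ℝ) ^ (m + S.card))
      = if R = Finset.univ then 1 else 0 := by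
  classical
  have key : (∑ S ∈ Finset.univ.powerset.filter (fun S => R ⊆ S), (-1 : ℝ) ^ (m + S.card))
      = ∑ T ∈ (Finset.univ \ R).powerset, (-1 : ℝ) ^ (m + (T.card + R.card)) := by
    refine Finset.sum_bij' (fun S _ => S \ R) (fun T _ => T ∪ R) ?_ ?_ ?_ ?_ ?_
    · intro S hS
      simp only [mem_filter, mem_powerset] at hS
      simpa only [mem_powerset] using sdiff_subset_sdiff (subset_univ S) (Finset.Subset.refl R)
    · intro T hT
      simp only [mem_powerset] at hT
      simp only [mem_filter, mem_powerset]
      exact ⟨subset_univ _, subset_union_right⟩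
    · intro S hS
      simp only [mem_filter, mem_powerset] at hS
      exact sdiff_union_of_subset hS.2
    · intro T hT
      simp only [mem_powerset] at hT
      have hd : Disjoint T R := (subset_sdiff.mp hT).2
      show (T ∪ R) \ R = T
      rw [union_sdiff_right, sdiff_eq_self_of_disjoint hd]
    · intro S hS
      simp only [mem_filter, mem_powerset] at hS
      rw [card_sdiff_add_card_eq_card hS.2]
  rw [key]
  have : (∑ T ∈ (Finset.univ \ R).powerset, (-1 : ℝ) ^ (m + (T.card + R.card)))
      = (-1 : ℝ) ^ (m + R.card) * ∑ T ∈ (Finset.univ \ R).powerset, (-1 : ℝ) ^ T.card := by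
    rw [Finset.mul_sum]
    refine Finset.sum_congr rfl fun T _ => ?_
    rw [← pow_add]
    ring_nf
  rw [this, real_sum_powerset]
  have he : (Finset.univ \ R = ∅) ↔ R = Finset.univ := by
    rw [Finset.sdiff_eq_empty_iff_subset]
    exact ⟨fun hc => Finset.univ_subset_iff.mp hc, fun hc => hc ▸ Finset.Subset.refl _⟩
  by_cases h : R = Finset.univ
  · subst h
    simp [he, Finset.card_univ, Even.neg_one_pow (Even.add_self m)]
  · simp [he, h]

theorem stmt_8 (m n : ℕ) (hm : 1 ≤ m) (hnm : m ≤ n) (x : Fin m → ℝ)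
    (hx : ∀ j, 0 < x j) : 0 < (-1 : ℝ) ^ (m + 1) * P m n x := by
  classical
  have hn : 1 ≤ n := le_trans hm hnm
  -- Step 1: extend sum to all subsets
  have h1 : P m n x = ∑ S ∈ (Finset.univ : Finset (Fin m)).powerset,
      (-1 : ℝ) ^ (S.card + 1) * (∑ j ∈ S, x j) ^ n := by
    rw [P, Finset.sum_filter]
    refine Finset.sum_congr rfl fun S _ => ?_
    by_cases hS : S.Nonempty
    · simp [hS]
    · rw [Finset.not_nonempty_iff_eq_empty] at hS
      subst hS
      simp [zero_pow (by omega : n ≠ 0)]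
  -- Step 2: the key expansion
  have h2 : (-1 : ℝ) ^ (m + 1) * P m n x
      = ∑ f ∈ (Finset.univ : Finset (Fin n → Fin m)).filter Function.Surjective,
          ∏ i, x (f i) := by
    rw [h1, Finset.mul_sum]
    have step : ∀ S ∈ (Finset.univ : Finset (Fin m)).powerset,
        (-1 : ℝ) ^ (m + 1) * ((-1 : ℝ) ^ (S.card + 1) * (∑ j ∈ S, x j) ^ n)
        = ∑ f : Fin n → Fin m, (if ∀ i, f i ∈ S then (-1 : ℝ) ^ (m + S.card) * ∏ i, x (f i) else 0) := by
      intro S _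
      have hexp : (∑ j ∈ S, x j) ^ n = ∑ f ∈ Fintype.piFinset (fun _ : Fin n => S), ∏ i, x (f i) := by
        rw [← Finset.prod_univ_sum (fun _ : Fin n => S) (fun _ j => x j)]
        simp [Finset.prod_const, Finset.card_univ]
      have hpi : Fintype.piFinset (fun _ : Fin n => S)
          = (Finset.univ : Finset (Fin n → Fin m)).filter (fun f => ∀ i, f i ∈ S) := by
        ext f; simp [Fintype.mem_piFinset]
      rw [hexp, hpi, ← Finset.sum_filter, Finset.mul_sum, Finset.mul_sum]
      refine Finset.sum_congr rfl fun f _ => ?_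
      have : (-1 : ℝ) ^ (m + 1) * (-1 : ℝ) ^ (S.card + 1) = (-1 : ℝ) ^ (m + S.card) := by
        rw [← pow_add]
        have : m + 1 + (S.card + 1) = (m + S.card) + 2 := by ring
        rw [this, pow_add]
        norm_num
      rw [← mul_assoc, this]
    rw [Finset.sum_congr rfl step, Finset.sum_comm, Finset.sum_filter]
    refine Finset.sum_congr rfl fun f _ => ?_
    have hcond : ∀ S : Finset (Fin m), (∀ i, f i ∈ S) ↔ Finset.image f Finset.univ ⊆ S := by
      intro S
      rw [Finset.image_subset_iff]
      simp
    calc (∑ S ∈ (Finset.univ : Finset (Fin m)).powerset,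
            if ∀ i, f i ∈ S then (-1 : ℝ) ^ (m + S.card) * ∏ i, x (f i) else 0)
        = (∑ S ∈ (Finset.univ : Finset (Fin m)).powerset.filter
            (fun S => Finset.image f Finset.univ ⊆ S), (-1 : ℝ) ^ (m + S.card)) * ∏ i, x (f i) := by
          rw [Finset.sum_mul, Finset.sum_filter]
          refine Finset.sum_congr rfl fun S _ => ?_
          simp only [hcond S]
      _ = (if Function.Surjective f then (1:ℝ) else 0) * ∏ i, x (f i) := by
          rw [mySurjSum]
          congr 1
          have : Finset.image f Finset.univ = Finset.univ ↔ Function.Surjective f := by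
            constructor
            · intro h b
              have := Finset.mem_image.mp (h ▸ Finset.mem_univ b)
              obtain ⟨a, _, ha⟩ := this
              exact ⟨a, ha⟩
            · intro h
              apply Finset.eq_univ_of_forall
              intro b
              obtain ⟨a, ha⟩ := h b
              exact Finset.mem_image.mpr ⟨a, Finset.mem_univ a, ha⟩
          simp [this]
      _ = if Function.Surjective f then ∏ i, x (f i) else 0 := by split <;> simp
  rw [h2]
  refine Finset.sum_pos (fun f _ => Finset.prod_pos fun i _ => hx (f i)) ?_
  refine ⟨fun i => if h : (i : ℕ) < m then ⟨i, h⟩ else ⟨0, hm⟩, ?_⟩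
  simp only [Finset.mem_filter, Finset.mem_univ, true_and]
  intro j
  refine ⟨⟨(j : ℕ), lt_of_lt_of_le j.2 hnm⟩, ?_⟩
  simp [j.2]
end

section
/- For real variables x_1,...,x_m, P_{m+2}(x_1,...,x_m) = (−1)^{m+1} (m+2)!/2 · (∏_{j=1}^m x_j) · (3E_1² + E_2)/12, where E_k = Σ_j x_j^k. -/
/-!
The alternating subset sum `∑_{S ⊆ s} (-1)^|S| (∑_{j ∈ S} x_j)^n` is `n!` times the coefficient
of `t^n` in `∏_{j ∈ s} (1 - e^{t x_j})`. Each factor is `-t x_j (1 + t x_j / 2 + t² x_j² / 6 + ⋯)`,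
so with `m = |s|` the product starts at `t^m` and its `t^(m+2)` coefficient is
`(-1)^m (∏ x_j) (∑ x_j² / 6 + ∑_{i<j} x_i x_j / 4) = (-1)^m (∏ x_j) (3 E₁² + E₂) / 24`.
These coefficients are computed by induction on `s`, adjoining one variable at a time.
`P` is minus this sum, the empty set contributing `0^n = 0`.
-/

open Finset Nat

section
variable {ι : Type*} [DecidableEq ι]

noncomputable def altPowerSum (n : ℕ) (s : Finset ι) (x : ι → ℝ) : ℝ :=
  ∑ S ∈ s.powerset, (-1 : ℝ) ^ #S * (∑ j ∈ S, x j) ^ n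

noncomputable def altPowerCoeff (n : ℕ) (s : Finset ι) (x : ι → ℝ) : ℝ :=
  altPowerSum n s x / n !

lemma altPowerSum_insert {a : ι} {s : Finset ι} (ha : a ∉ s) (n : ℕ) (x : ι → ℝ) :
    altPowerSum n (insert a s) x =
      -∑ k ∈ range n, (n.choose k : ℝ) * x a ^ (n - k) * altPowerSum k s x := by
  have hbinom : ∀ T ∈ s.powerset, (-1 : ℝ) ^ #(insert a T) * (∑ j ∈ insert a T, x j) ^ n =
      -∑ k ∈ range (n + 1), (n.choose k : ℝ) * x a ^ (n - k) * ((-1) ^ #T * (∑ j ∈ T, x j) ^ k) := by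
    intro T hT
    have haT : a ∉ T := fun h => ha (mem_powerset.1 hT h)
    rw [card_insert_of_notMem haT, sum_insert haT, add_comm (x a), add_pow, mul_sum,
      ← sum_neg_distrib]
    exact sum_congr rfl fun k _ => by ring
  rw [altPowerSum, sum_powerset_insert ha, sum_congr rfl hbinom, sum_neg_distrib, sum_comm,
    sum_range_succ]
  simp only [← mul_sum, choose_self, Nat.sub_self, altPowerSum]
  ring

lemma altPowerCoeff_insert {a : ι} {s : Finset ι} (ha : a ∉ s) (n : ℕ) (x : ι → ℝ) :
    altPowerCoeff n (insert a s) x =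
      -∑ k ∈ range n, x a ^ (n - k) / (n - k)! * altPowerCoeff k s x := by
  rw [altPowerCoeff, altPowerSum_insert ha, neg_div, sum_div]
  congr 1
  refine sum_congr rfl fun k hk => ?_
  rw [altPowerCoeff, cast_choose ℝ (mem_range.1 hk).le]
  field_simp

lemma altPowerCoeff_eq_zero_of_lt_card (s : Finset ι) (x : ι → ℝ) {n : ℕ} (hn : n < #s) :
    altPowerCoeff n s x = 0 := by
  induction s using Finset.induction_on generalizing n with
  | empty => simp at hn
  | insert a s ha ih =>
    rw [card_insert_of_notMem ha] at hn
    rw [altPowerCoeff_insert ha, neg_eq_zero]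
    exact sum_eq_zero fun k hk => by rw [ih (by simp at hk; omega), mul_zero]

lemma altPowerCoeff_card_add_insert {a : ι} {s : Finset ι} (ha : a ∉ s) (r : ℕ) (x : ι → ℝ) :
    altPowerCoeff (#s + (r + 1)) (insert a s) x =
      -∑ i ∈ range (r + 1), x a ^ (r + 1 - i) / (r + 1 - i)! * altPowerCoeff (#s + i) s x := by
  rw [altPowerCoeff_insert ha, sum_range_add,
    sum_eq_zero fun k hk => by rw [altPowerCoeff_eq_zero_of_lt_card s x (mem_range.1 hk), mul_zero],
    zero_add]
  simp only [Nat.add_sub_add_left]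

lemma altPowerCoeff_card (s : Finset ι) (x : ι → ℝ) :
    altPowerCoeff #s s x = (-1) ^ #s * ∏ j ∈ s, x j := by
  induction s using Finset.induction_on with
  | empty => simp [altPowerCoeff, altPowerSum]
  | insert a s ha ih =>
    rw [card_insert_of_notMem ha, prod_insert ha]
    refine (altPowerCoeff_card_add_insert ha 0 x).trans ?_
    simp only [zero_add, range_one, sum_singleton, tsub_zero, pow_one, factorial_one, cast_one,
      div_one, add_zero, ih]
    ring

lemma altPowerCoeff_card_add_one (s : Finset ι) (x : ι → ℝ) :
    altPowerCoeff (#s + 1) s x = (-1) ^ #s * (∏ j ∈ s, x j) * (∑ j ∈ s, x j) / 2 := by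
  induction s using Finset.induction_on with
  | empty => simp [altPowerCoeff, altPowerSum]
  | insert a s ha ih =>
    rw [card_insert_of_notMem ha, prod_insert ha, sum_insert ha]
    refine (altPowerCoeff_card_add_insert ha 1 x).trans ?_
    simp only [sum_range_succ, range_one, sum_singleton, tsub_zero, add_zero, altPowerCoeff_card,
      Nat.add_one_sub_one, pow_one, factorial_one, cast_one, div_one, ih]
    ring

lemma altPowerCoeff_card_add_two (s : Finset ι) (x : ι → ℝ) :
    altPowerCoeff (#s + 2) s x =
      (-1) ^ #s * (∏ j ∈ s, x j) * (3 * (∑ j ∈ s, x j) ^ 2 + ∑ j ∈ s, x j ^ 2) / 24 := by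
  induction s using Finset.induction_on with
  | empty => simp [altPowerCoeff, altPowerSum]
  | insert a s ha ih =>
    rw [card_insert_of_notMem ha, prod_insert ha, sum_insert ha, sum_insert ha]
    refine (altPowerCoeff_card_add_insert ha 2 x).trans ?_
    simp only [sum_range_succ, range_one, sum_singleton, tsub_zero, add_zero, altPowerCoeff_card,
      Nat.add_one_sub_one, factorial_two, cast_ofNat, altPowerCoeff_card_add_one, ih]
    ring

end

lemma P_eq_neg_altPowerSum (m : ℕ) {n : ℕ} (hn : n ≠ 0) (x : Fin m → ℝ) :
    P m n x = -altPowerSum n univ x := by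
  rw [P, altPowerSum, ← sum_neg_distrib, sum_filter_of_ne]
  · exact sum_congr rfl fun S _ => by ring
  · rintro S - hS
    rw [nonempty_iff_ne_empty]
    rintro rfl
    simp [hn] at hS

theorem stmt_10 (m : ℕ) (x : Fin m → ℝ) :
    P m (m + 2) x =
      (-1 : ℝ) ^ (m + 1) * ((m + 2).factorial : ℝ) / 2 * (∏ j, x j) *
        ((3 * (∑ j, x j) ^ 2 + ∑ j, (x j) ^ 2) / 12) := by
  have h := altPowerCoeff_card_add_two (univ : Finset (Fin m)) x
  rw [Finset.card_fin, altPowerCoeff, div_eq_iff (by positivity)] at h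
  rw [P_eq_neg_altPowerSum m (by omega), h]
  ring
end

section
/- For real variables x_1,...,x_m, P_{m+3}(x_1,...,x_m) = (−1)^{m+1} (m+3)!/6 · (∏_{j=1}^m x_j) · (E_1² + E_2)·E_1/8. -/
open Finset

noncomputable def G {ι : Type*} (x : ι → ℝ) (s : Finset ι) (n : ℕ) (t : ℝ) : ℝ :=
  ∑ S ∈ s.powerset, (-1 : ℝ) ^ S.card * (t + ∑ j ∈ S, x j) ^ n

lemma G_insert {ι : Type*} [DecidableEq ι] (x : ι → ℝ) {a : ι} {s : Finset ι}
    (h : a ∉ s) (n : ℕ) (t : ℝ) :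
    G x (insert a s) n t = G x s n t - G x s n (t + x a) := by
  unfold G
  rw [Finset.sum_powerset_insert h]
  have : ∀ S ∈ s.powerset,
      (-1 : ℝ) ^ (insert a S).card * (t + ∑ j ∈ insert a S, x j) ^ n
        = -((-1 : ℝ) ^ S.card * ((t + x a) + ∑ j ∈ S, x j) ^ n) := by
    intro S hS
    have haS : a ∉ S := fun hmem => h (Finset.mem_powerset.mp hS hmem)
    rw [Finset.card_insert_of_notMem haS, Finset.sum_insert haS, pow_succ]
    ring_nf
  rw [Finset.sum_congr rfl this, Finset.sum_neg_distrib]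
  ring

lemma G_shift {ι : Type*} (x : ι → ℝ) (s : Finset ι) (n : ℕ) (t a : ℝ) :
    G x s n (t + a) = ∑ k ∈ Finset.range (n + 1), (n.choose k : ℝ) * a ^ (n - k) * G x s k t := by
  unfold G
  have : ∀ S ∈ s.powerset,
      (-1 : ℝ) ^ S.card * ((t + a) + ∑ j ∈ S, x j) ^ n
        = ∑ k ∈ Finset.range (n + 1),
            (n.choose k : ℝ) * a ^ (n - k) * ((-1 : ℝ) ^ S.card * (t + ∑ j ∈ S, x j) ^ k) := by
    intro S _
    rw [show (t + a) + ∑ j ∈ S, x j = (t + ∑ j ∈ S, x j) + a by ring, add_pow, Finset.mul_sum]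
    exact Finset.sum_congr rfl fun k _ => by ring
  rw [Finset.sum_congr rfl this, Finset.sum_comm]
  simp only [Finset.mul_sum]

lemma G_insert' {ι : Type*} [DecidableEq ι] (x : ι → ℝ) {a : ι} {s : Finset ι}
    (h : a ∉ s) (n : ℕ) (t : ℝ) :
    G x (insert a s) n t
      = -∑ k ∈ Finset.range n, (n.choose k : ℝ) * (x a) ^ (n - k) * G x s k t := by
  rw [G_insert x h, G_shift, Finset.sum_range_succ, Nat.choose_self]
  simp

lemma key_s11 {ι : Type*} [DecidableEq ι] (x : ι → ℝ) (s : Finset ι) :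
    (∀ n < s.card, ∀ t : ℝ, G x s n t = 0) ∧
    (∀ t : ℝ, G x s s.card t = (-1) ^ s.card * (s.card.factorial : ℝ) * ∏ j ∈ s, x j) ∧
    (∀ t : ℝ, G x s (s.card + 1) t
      = (-1) ^ s.card * ((s.card + 1).factorial : ℝ) * (∏ j ∈ s, x j)
        * (t + (∑ j ∈ s, x j) / 2)) ∧
    (∀ t : ℝ, G x s (s.card + 2) t
      = (-1) ^ s.card * ((s.card + 2).factorial : ℝ) * (∏ j ∈ s, x j)
        * (t ^ 2 / 2 + t * (∑ j ∈ s, x j) / 2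
          + (3 * (∑ j ∈ s, x j) ^ 2 + ∑ j ∈ s, (x j) ^ 2) / 24)) ∧
    (∀ t : ℝ, G x s (s.card + 3) t
      = (-1) ^ s.card * ((s.card + 3).factorial : ℝ) * (∏ j ∈ s, x j)
        * (t ^ 3 / 6 + t ^ 2 * (∑ j ∈ s, x j) / 4
          + t * (3 * (∑ j ∈ s, x j) ^ 2 + ∑ j ∈ s, (x j) ^ 2) / 24
          + ((∑ j ∈ s, x j) ^ 3 + (∑ j ∈ s, x j) * ∑ j ∈ s, (x j) ^ 2) / 48)) := by
  classical
  induction s using Finset.induction_on with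
  | empty =>
    refine ⟨fun n hn t => by simp at hn, fun t => ?_, fun t => ?_, fun t => ?_, fun t => ?_⟩ <;>
      simp [G, Nat.factorial] <;> ring
  | @insert a s ha IH =>
    obtain ⟨IH0, IHa, IHb, IHc, IHd⟩ := IH
    have hcard : (insert a s).card = s.card + 1 := Finset.card_insert_of_notMem ha
    have hprod : (∏ j ∈ insert a s, x j) = x a * ∏ j ∈ s, x j := Finset.prod_insert ha
    have hsum : (∑ j ∈ insert a s, x j) = x a + ∑ j ∈ s, x j := Finset.sum_insert ha
    have hsum2 : (∑ j ∈ insert a s, (x j) ^ 2) = (x a) ^ 2 + ∑ j ∈ s, (x j) ^ 2 :=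
      Finset.sum_insert ha
    have hzero : ∀ (n m : ℕ), m ≤ s.card → ∀ t : ℝ,
        (∑ k ∈ Finset.range m, (n.choose k : ℝ) * (x a) ^ (n - k) * G x s k t) = 0 := by
      intro n m hm t
      exact Finset.sum_eq_zero fun k hk => by
        rw [IH0 k (lt_of_lt_of_le (Finset.mem_range.mp hk) hm) t, mul_zero]
    refine ⟨?_, ?_, ?_, ?_, ?_⟩
    · intro n hn t
      rw [G_insert' x ha, neg_eq_zero]
      exact Finset.sum_eq_zero fun k hk => by
        rw [IH0 k (by have := Finset.mem_range.mp hk; omega) t, mul_zero]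
    · intro t
      rw [hcard, hprod, G_insert' x ha, Finset.sum_range_succ, hzero _ s.card le_rfl, IHa t]
      rw [Nat.choose_succ_self_right, Nat.add_sub_cancel_left]
      push_cast [Nat.factorial_succ]
      ring
    · intro t
      rw [hcard, hprod, hsum, G_insert' x ha, Finset.sum_range_succ, Finset.sum_range_succ,
        hzero _ s.card le_rfl, IHa t, IHb t, Nat.choose_succ_self_right,
        show s.card + 1 + 1 - (s.card + 1) = 1 by omega,
        show s.card + 1 + 1 - s.card = 2 by omega]
      have h2 := Nat.choose_mul_factorial_mul_factorial (show s.card ≤ s.card + 1 + 1 by omega)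
      rw [show s.card + 1 + 1 - s.card = 2 by omega,
        show Nat.factorial 2 = 2 from rfl] at h2
      have h2R : ((s.card + 1 + 1).choose s.card : ℝ) * (s.card.factorial : ℝ) * 2
          = ((s.card + 1 + 1).factorial : ℝ) := by exact_mod_cast h2
      push_cast [Nat.factorial_succ] at h2R ⊢
      linear_combination (-(x a) ^ 2 * (-1 : ℝ) ^ s.card * (∏ j ∈ s, x j) / 2) * h2R
    · intro t
      have IHc' : ∀ u : ℝ, G x s (s.card + 1 + 1) u
          = (-1) ^ s.card * ((s.card + 1 + 1).factorial : ℝ) * (∏ j ∈ s, x j)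
            * (u ^ 2 / 2 + u * (∑ j ∈ s, x j) / 2
              + (3 * (∑ j ∈ s, x j) ^ 2 + ∑ j ∈ s, (x j) ^ 2) / 24) := by
        intro u
        rw [show s.card + 1 + 1 = s.card + 2 by omega]
        exact IHc u
      have h3 := Nat.choose_mul_factorial_mul_factorial (show s.card ≤ s.card + 1 + 1 + 1 by omega)
      rw [show s.card + 1 + 1 + 1 - s.card = 3 by omega,
        show Nat.factorial 3 = 6 from rfl] at h3
      have h3R : ((s.card + 1 + 1 + 1).choose s.card : ℝ) * (s.card.factorial : ℝ) * 6
          = ((s.card + 1 + 1 + 1).factorial : ℝ) := by exact_mod_cast h3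
      have h3b := Nat.choose_mul_factorial_mul_factorial
        (show s.card + 1 ≤ s.card + 1 + 1 + 1 by omega)
      rw [show s.card + 1 + 1 + 1 - (s.card + 1) = 2 by omega,
        show Nat.factorial 2 = 2 from rfl] at h3b
      have h3bR : ((s.card + 1 + 1 + 1).choose (s.card + 1) : ℝ) * ((s.card + 1).factorial : ℝ) * 2
          = ((s.card + 1 + 1 + 1).factorial : ℝ) := by exact_mod_cast h3b
      rw [hcard, hprod, hsum, hsum2, show s.card + 1 + 2 = s.card + 1 + 1 + 1 by omega,
        G_insert' x ha, Finset.sum_range_succ, Finset.sum_range_succ, Finset.sum_range_succ,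
        hzero _ s.card le_rfl, IHa t, IHb t, IHc' t, Nat.choose_succ_self_right,
        show s.card + 1 + 1 + 1 - (s.card + 1 + 1) = 1 by omega,
        show s.card + 1 + 1 + 1 - (s.card + 1) = 2 by omega,
        show s.card + 1 + 1 + 1 - s.card = 3 by omega]
      push_cast [Nat.factorial_succ] at h3R h3bR ⊢
      linear_combination (-(x a) ^ 3 * (-1 : ℝ) ^ s.card * (∏ j ∈ s, x j) / 6) * h3R
        + (-(x a) ^ 2 * (-1 : ℝ) ^ s.card * (∏ j ∈ s, x j)
            * (t + (∑ j ∈ s, x j) / 2) / 2) * h3bR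
    · intro t
      have IHc' : ∀ u : ℝ, G x s (s.card + 1 + 1) u
          = (-1) ^ s.card * ((s.card + 1 + 1).factorial : ℝ) * (∏ j ∈ s, x j)
            * (u ^ 2 / 2 + u * (∑ j ∈ s, x j) / 2
              + (3 * (∑ j ∈ s, x j) ^ 2 + ∑ j ∈ s, (x j) ^ 2) / 24) := by
        intro u
        rw [show s.card + 1 + 1 = s.card + 2 by omega]
        exact IHc u
      have IHd' : ∀ u : ℝ, G x s (s.card + 1 + 1 + 1) u
          = (-1) ^ s.card * ((s.card + 1 + 1 + 1).factorial : ℝ) * (∏ j ∈ s, x j)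
            * (u ^ 3 / 6 + u ^ 2 * (∑ j ∈ s, x j) / 4
              + u * (3 * (∑ j ∈ s, x j) ^ 2 + ∑ j ∈ s, (x j) ^ 2) / 24
              + ((∑ j ∈ s, x j) ^ 3 + (∑ j ∈ s, x j) * ∑ j ∈ s, (x j) ^ 2) / 48) := by
        intro u
        rw [show s.card + 1 + 1 + 1 = s.card + 3 by omega]
        exact IHd u
      have h4 := Nat.choose_mul_factorial_mul_factorial
        (show s.card ≤ s.card + 1 + 1 + 1 + 1 by omega)
      rw [show s.card + 1 + 1 + 1 + 1 - s.card = 4 by omega,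
        show Nat.factorial 4 = 24 from rfl] at h4
      have h4R : ((s.card + 1 + 1 + 1 + 1).choose s.card : ℝ) * (s.card.factorial : ℝ) * 24
          = ((s.card + 1 + 1 + 1 + 1).factorial : ℝ) := by exact_mod_cast h4
      have h4b := Nat.choose_mul_factorial_mul_factorial
        (show s.card + 1 ≤ s.card + 1 + 1 + 1 + 1 by omega)
      rw [show s.card + 1 + 1 + 1 + 1 - (s.card + 1) = 3 by omega,
        show Nat.factorial 3 = 6 from rfl] at h4b
      have h4bR : ((s.card + 1 + 1 + 1 + 1).choose (s.card + 1) : ℝ)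
            * ((s.card + 1).factorial : ℝ) * 6
          = ((s.card + 1 + 1 + 1 + 1).factorial : ℝ) := by exact_mod_cast h4b
      have h4c := Nat.choose_mul_factorial_mul_factorial
        (show s.card + 1 + 1 ≤ s.card + 1 + 1 + 1 + 1 by omega)
      rw [show s.card + 1 + 1 + 1 + 1 - (s.card + 1 + 1) = 2 by omega,
        show Nat.factorial 2 = 2 from rfl] at h4c
      have h4cR : ((s.card + 1 + 1 + 1 + 1).choose (s.card + 1 + 1) : ℝ)
            * ((s.card + 1 + 1).factorial : ℝ) * 2
          = ((s.card + 1 + 1 + 1 + 1).factorial : ℝ) := by exact_mod_cast h4c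
      rw [hcard, hprod, hsum, hsum2, show s.card + 1 + 3 = s.card + 1 + 1 + 1 + 1 by omega,
        G_insert' x ha, Finset.sum_range_succ, Finset.sum_range_succ, Finset.sum_range_succ,
        Finset.sum_range_succ, hzero _ s.card le_rfl, IHa t, IHb t, IHc' t, IHd' t,
        Nat.choose_succ_self_right,
        show s.card + 1 + 1 + 1 + 1 - (s.card + 1 + 1 + 1) = 1 by omega,
        show s.card + 1 + 1 + 1 + 1 - (s.card + 1 + 1) = 2 by omega,
        show s.card + 1 + 1 + 1 + 1 - (s.card + 1) = 3 by omega,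
        show s.card + 1 + 1 + 1 + 1 - s.card = 4 by omega]
      push_cast [Nat.factorial_succ] at h4R h4bR h4cR ⊢
      linear_combination (-(x a) ^ 4 * (-1 : ℝ) ^ s.card * (∏ j ∈ s, x j) / 24) * h4R
        + (-(x a) ^ 3 * (-1 : ℝ) ^ s.card * (∏ j ∈ s, x j)
            * (t + (∑ j ∈ s, x j) / 2) / 6) * h4bR
        + (-(x a) ^ 2 * (-1 : ℝ) ^ s.card * (∏ j ∈ s, x j)
            * (t ^ 2 / 2 + t * (∑ j ∈ s, x j) / 2
              + (3 * (∑ j ∈ s, x j) ^ 2 + ∑ j ∈ s, (x j) ^ 2) / 24) / 2) * h4cR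

theorem stmt_11 (m : ℕ) (x : Fin m → ℝ) :
    P m (m + 3) x =
      (-1 : ℝ) ^ (m + 1) * ((m + 3).factorial : ℝ) / 6 * (∏ j, x j) *
        (((∑ j, x j) ^ 2 + ∑ j, (x j) ^ 2) * (∑ j, x j) / 8) := by
  have hkey := (key_s11 x (Finset.univ : Finset (Fin m))).2.2.2.2 0
  rw [Finset.card_univ, Fintype.card_fin] at hkey
  have hP : P m (m + 3) x = -G x Finset.univ (m + 3) 0 := by
    unfold P G
    rw [← Finset.sum_filter_add_sum_filter_not Finset.univ.powerset Finset.Nonempty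
      (fun S => (-1 : ℝ) ^ S.card * (0 + ∑ j ∈ S, x j) ^ (m + 3))]
    have h0 : ∑ S ∈ Finset.univ.powerset.filter (fun S => ¬ S.Nonempty),
        (-1 : ℝ) ^ S.card * (0 + ∑ j ∈ S, x j) ^ (m + 3) = 0 := by
      apply Finset.sum_eq_zero
      intro S hS
      have hSe : S = ∅ := Finset.not_nonempty_iff_eq_empty.mp (Finset.mem_filter.mp hS).2
      subst hSe; simp
    rw [h0, add_zero, ← Finset.sum_neg_distrib]
    apply Finset.sum_congr rfl
    intro S hS
    rw [zero_add, pow_succ]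
    ring
  rw [hP, hkey]
  ring
end
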